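/- (Exponential in AH, degenerate case.) Let m₁, m₂, m₃, m₄ be real numbers with m₃² + m₄² − m₂² = 0. Define x₁(t) = e^{m₁t} and x_s(t) = m_s·t·e^{m₁t} for s = 2,3,4. Then for every real t the functions satisfy the associated system: x₁'(t) = m₁x₁ − m₂x₂ + m₃x₃ + m₄x₄, x₂'(t) = m₂x₁ + m₁x₂ − m₃x₄ + m₄x₃, x₃'(t) = m₃x₁ + m₄x₂ + m₁x₃ − m₂x₄, x₄'(t) = m₄x₁ − m₃x₂ + m₂x₃ + m₁x₄ (each as a HasDerivAt statement), and (x₁(0), x₂(0), x₃(0), x₄(0)) = (1, 0, 0, 0); this establishes the representation Exp(M) = e^{m₁}(1 + m₂·i + m₃·j + m₄·k) in this case. -/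

import Mathlib

lemma hasDerivAt_exp_const_mul (a t : ℝ) :
    HasDerivAt (fun t => Real.exp (a * t)) (a * Real.exp (a * t)) t := by
  simpa [mul_comm] using ((hasDerivAt_id t).const_mul a).exp

lemma hasDerivAt_const_mul_mul_exp_const_mul (a c t : ℝ) :
    HasDerivAt (fun t => c * t * Real.exp (a * t))
      (c * Real.exp (a * t) + a * (c * t * Real.exp (a * t))) t :=
  (((hasDerivAt_id' t).const_mul c).mul (hasDerivAt_exp_const_mul a t)).congr_deriv (by ring)

/-- Exponential in AH = ℍ[ℝ,−1,1], degenerate case: establishes Exp(M) = e^{m₁}(1 + m₂·i + m₃·j + m₄·k). The given functions solve the associated real linear ODE system of Ẋ = M·X with initial value (1,0,0,0). -/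
theorem exp_AH_degenerate (m₁ m₂ m₃ m₄ : ℝ)
    (h : m₃ ^ 2 + m₄ ^ 2 - m₂ ^ 2 = 0)
    (x₁ x₂ x₃ x₄ : ℝ → ℝ)
    (hx₁ : x₁ = fun t => Real.exp (m₁ * t))
    (hx₂ : x₂ = fun t => m₂ * t * Real.exp (m₁ * t))
    (hx₃ : x₃ = fun t => m₃ * t * Real.exp (m₁ * t))
    (hx₄ : x₄ = fun t => m₄ * t * Real.exp (m₁ * t))
    :
    (∀ t : ℝ,
      HasDerivAt x₁ (m₁ * x₁ t - m₂ * x₂ t + m₃ * x₃ t + m₄ * x₄ t) t ∧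
      HasDerivAt x₂ (m₂ * x₁ t + m₁ * x₂ t - m₃ * x₄ t + m₄ * x₃ t) t ∧
      HasDerivAt x₃ (m₃ * x₁ t + m₄ * x₂ t + m₁ * x₃ t - m₂ * x₄ t) t ∧
      HasDerivAt x₄ (m₄ * x₁ t - m₃ * x₂ t + m₂ * x₃ t + m₁ * x₄ t) t) ∧
    x₁ 0 = 1 ∧ x₂ 0 = 0 ∧ x₃ 0 = 0 ∧ x₄ 0 = 0 := by
  subst hx₁ hx₂ hx₃ hx₄
  refine ⟨fun t => ⟨?_, ?_, ?_, ?_⟩, by simp, by simp, by simp, by simp⟩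
  -- the terms of x₁' that are quadratic in (m₂, m₃, m₄) add up to t e^{m₁t} (m₃² + m₄² − m₂²)
  · exact (hasDerivAt_exp_const_mul m₁ t).congr_deriv
      (by linear_combination -(t * Real.exp (m₁ * t)) * h)
  all_goals exact (hasDerivAt_const_mul_mul_exp_const_mul m₁ _ t).congr_deriv (by ring)
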